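/- Let S be a triangulated category with classical generators G and H. Define metrics L_i(G) = ⟨G⟩^{(−∞,−i]} (the smallest full subcategory containing T^{-j}G for j ≤ −i, closed under direct summands and extensions) and similarly L_i(H). Then the metrics {L_i(G)} and {L_i(H)} are equivalent: for every i there exists j with L_j(G) ⊆ L_i(H) and vice versa. -/
import Mathlib


namespace Stmt10

open CategoryTheory Category Limits Pretriangulated ZeroObject

universe v u

variable {S : Type u} [Category.{v} S] [Preadditive S] [HasZeroObject S]
  [HasShift S ℤ] [∀ n : ℤ, (CategoryTheory.shiftFunctor S n).Additive] [Pretriangulated S]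

/-- A class of objects closed under isomorphisms, containing `0`, and closed under
extensions and direct summands. -/
def IsExtSummandClosed (Q : Set S) : Prop :=
  (∀ X Y : S, (X ≅ Y) → X ∈ Q → Y ∈ Q) ∧ ((0 : S) ∈ Q) ∧
  (∀ Tr ∈ (distTriang S), Tr.obj₁ ∈ Q → Tr.obj₃ ∈ Q → Tr.obj₂ ∈ Q) ∧
  (∀ (X Y : S) (r : X ⟶ Y) (s : Y ⟶ X), s ≫ r = 𝟙 Y → X ∈ Q → Y ∈ Q)

/-- `⟨G⟩` for a prescribed set `P` of shifts: the smallest subcategory containing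
`G⟦m⟧` for `m ∈ P`, closed under isomorphisms, direct summands and extensions.
For the interval `(−∞, −i]` of the paper (which contains `T^{-j} G = G⟦-j⟧` for
`j ≤ −i`) one takes `P = {m | i ≤ m}`. -/
def genSet (G : S) (P : Set ℤ) : Set S :=
  ⋂₀ {Q | IsExtSummandClosed Q ∧ ∀ m ∈ P, G⟦m⟧ ∈ Q}

/-- `G` is a classical generator of `S` if `S = ⟨G⟩^{(−∞,∞)}`. -/
def IsClassicalGenerator (G : S) : Prop := ∀ X : S, X ∈ genSet G Set.univ

lemma genSet_closed (G : S) (P : Set ℤ) : IsExtSummandClosed (genSet G P) := by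
  refine ⟨?_, ?_, ?_, ?_⟩
  · intro X Y e hX Q hQ; exact hQ.1.1 X Y e (hX Q hQ)
  · intro Q hQ; exact hQ.1.2.1
  · intro Tr hTr h1 h3 Q hQ; exact hQ.1.2.2.1 Tr hTr (h1 Q hQ) (h3 Q hQ)
  · intro X Y r s hs hX Q hQ; exact hQ.1.2.2.2 X Y r s hs (hX Q hQ)

lemma shift_mem_genSet (G : S) (P : Set ℤ) {m : ℤ} (hm : m ∈ P) : G⟦m⟧ ∈ genSet G P :=
  fun _ hQ => hQ.2 m hm

lemma genSet_min (G : S) (P : Set ℤ) (Q : Set S) (hQ : IsExtSummandClosed Q)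
    (h : ∀ m ∈ P, G⟦m⟧ ∈ Q) : genSet G P ⊆ Q := fun _ hX => hX Q ⟨hQ, h⟩

lemma genSet_mono (G : S) {P P' : Set ℤ} (h : P ⊆ P') : genSet G P ⊆ genSet G P' :=
  genSet_min G P _ (genSet_closed G P') (fun _ hm => shift_mem_genSet G P' (h hm))

lemma genSet_shift (G : S) (P : Set ℤ) (k : ℤ) {X : S} (hX : X ∈ genSet G P) :
    X⟦k⟧ ∈ genSet G ((· + k) '' P) := by
  have hC := genSet_closed G ((· + k) '' P)
  refine genSet_min G P {Y | Y⟦k⟧ ∈ genSet G ((· + k) '' P)} ⟨?_, ?_, ?_, ?_⟩ ?_ hX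
  · intro X Y e hX
    exact hC.1 _ _ ((shiftFunctor S k).mapIso e) hX
  · exact hC.1 _ _ ((shiftFunctor S k).mapZeroObject).symm hC.2.1
  · intro Tr hTr h1 h3
    exact hC.2.2.1 _ (Triangle.shift_distinguished Tr hTr k) h1 h3
  · intro X Y r s hs hX
    refine hC.2.2.2 _ _ (r⟦k⟧') (s⟦k⟧') ?_ hX
    rw [← Functor.map_comp, hs, CategoryTheory.Functor.map_id]
  · intro m hm
    exact hC.1 _ _ ((shiftFunctorAdd S m k).app G) (shift_mem_genSet G _ ⟨m, hm, rfl⟩)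

lemma exists_bound (G : S) {X : S} (hX : X ∈ genSet G Set.univ) :
    ∃ A : ℕ, X ∈ genSet G (Set.Icc (-(A : ℤ)) A) := by
  have key : X ∈ ⋃ A : ℕ, genSet G (Set.Icc (-(A : ℤ)) A) := by
    refine genSet_min G Set.univ _ ⟨?_, ?_, ?_, ?_⟩ ?_ hX
    · rintro X Y e ⟨_, ⟨A, rfl⟩, hX⟩
      exact Set.mem_iUnion.2 ⟨A, (genSet_closed G _).1 _ _ e hX⟩
    · exact Set.mem_iUnion.2 ⟨0, (genSet_closed G _).2.1⟩
    · rintro Tr hTr ⟨_, ⟨A₁, rfl⟩, h1⟩ ⟨_, ⟨A₂, rfl⟩, h3⟩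
      refine Set.mem_iUnion.2 ⟨max A₁ A₂, (genSet_closed G _).2.2.1 Tr hTr ?_ ?_⟩
      · exact genSet_mono G (Set.Icc_subset_Icc (by simp) (by simp)) h1
      · exact genSet_mono G (Set.Icc_subset_Icc (by simp) (by simp)) h3
    · rintro X Y r s hs ⟨_, ⟨A, rfl⟩, hX⟩
      exact Set.mem_iUnion.2 ⟨A, (genSet_closed G _).2.2.2 X Y r s hs hX⟩
    · intro m _
      refine Set.mem_iUnion.2 ⟨m.natAbs, shift_mem_genSet G _ ?_⟩
      simp only [Set.mem_Icc]
      omega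
  simpa using key

lemma finer (G H : S) (A : ℕ) (hGH : G ∈ genSet H (Set.Icc (-(A : ℤ)) A)) (i : ℕ) :
    genSet G {m : ℤ | ((i + A : ℕ) : ℤ) ≤ m} ⊆ genSet H {m : ℤ | (i : ℤ) ≤ m} := by
  refine genSet_min G _ _ (genSet_closed H _) ?_
  intro m hm
  have h1 : G⟦m⟧ ∈ genSet H ((· + m) '' Set.Icc (-(A : ℤ)) A) := genSet_shift H _ m hGH
  refine genSet_mono H ?_ h1
  rintro x ⟨p, hp, rfl⟩
  simp only [Set.mem_Icc] at hp
  simp only [Set.mem_setOf_eq] at hm ⊢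
  push_cast at hm
  omega

/-- for two classical generators `G, H` of `S`, the metrics
`L_i(G) = ⟨G⟩^{(−∞,−i]}` and `L_i(H) = ⟨H⟩^{(−∞,−i]}` are equivalent: each is finer
than the other. -/
theorem statement10 (G H : S)
    (hG : IsClassicalGenerator G) (hH : IsClassicalGenerator H) :
    (∀ i : ℕ, ∃ j : ℕ, genSet G {m : ℤ | (j : ℤ) ≤ m} ⊆ genSet H {m : ℤ | (i : ℤ) ≤ m}) ∧
    (∀ i : ℕ, ∃ j : ℕ, genSet H {m : ℤ | (j : ℤ) ≤ m} ⊆ genSet G {m : ℤ | (i : ℤ) ≤ m}) := by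
  obtain ⟨A₁, hA₁⟩ := exists_bound H (hH G)
  obtain ⟨A₂, hA₂⟩ := exists_bound G (hG H)
  exact ⟨fun i => ⟨i + A₁, finer G H A₁ hA₁ i⟩, fun i => ⟨i + A₂, finer H G A₂ hA₂ i⟩⟩

end Stmt10
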